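/- arXiv:1708.02558 — 6 statements merged into one kernel-verified Lean document; each statement's English description precedes it below -/
import Mathlib

section
/- Suppose N(c₁,c₂) ≠ 0. Then for every nonzero vector (t₀,t₁,t₂,t₃) ∈ ℂ⁴ satisfying G₁(t) = 0 and G₂(t) = 0, where G₁ = a₁t₁² + a₂t₂² + a₃t₃² - c₁t₀² and G₂ = t₁² + t₂² + t₃² - c₂t₀², the 2×4 Jacobian matrix (∂G_i/∂t_j) evaluated at (t₀,t₁,t₂,t₃) has rank 2. (This expresses that the projective closure 𝓔_c of E_c in ℙ³ is a smooth projective curve.) -/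
lemma rank_two_of_minor {M : Matrix (Fin 2) (Fin 4) ℂ} (j k : Fin 4)
    (h : M 0 j * M 1 k - M 0 k * M 1 j ≠ 0) : M.rank = 2 := by
  refine le_antisymm (M.rank_le_card_height.trans (by simp)) ?_
  set B : Matrix (Fin 4) (Fin 2) ℂ := fun r c => if r = ![j, k] c then 1 else 0 with hB
  have hMB : M * B = !![M 0 j, M 0 k; M 1 j, M 1 k] := by
    ext i c
    rw [Matrix.mul_apply]
    simp only [hB, mul_ite, mul_one, mul_zero]
    rw [Finset.sum_ite_eq' Finset.univ]
    fin_cases i <;> fin_cases c <;> simp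
  have hdet : IsUnit (!![M 0 j, M 0 k; M 1 j, M 1 k] : Matrix (Fin 2) (Fin 2) ℂ).det := by
    rw [Matrix.det_fin_two]
    simpa [isUnit_iff_ne_zero] using h
  have h2 : (!![M 0 j, M 0 k; M 1 j, M 1 k] : Matrix (Fin 2) (Fin 2) ℂ).rank = 2 := by
    rw [Matrix.rank_of_isUnit _ ((Matrix.isUnit_iff_isUnit_det _).mpr hdet)]
    simp
  calc (2 : ℕ) = (M * B).rank := by rw [hMB, h2]
    _ ≤ M.rank := Matrix.rank_mul_le_left M B

/-- Let `a₁, a₂, a₃` be distinct complex numbers, suppose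
`N(c₁,c₂) = ∏ᵢ (c₁ - aᵢc₂) ≠ 0`.  Then for every nonzero vector `(t₀,t₁,t₂,t₃) ∈ ℂ⁴`
satisfying `G₁(t) = a₁t₁² + a₂t₂² + a₃t₃² - c₁t₀² = 0` and
`G₂(t) = t₁² + t₂² + t₃² - c₂t₀² = 0`, the 2×4 Jacobian matrix `(∂Gᵢ/∂tⱼ)` evaluated at
`(t₀,t₁,t₂,t₃)` has rank 2 (the projective closure `𝓔_c` of `E_c` in `ℙ³` is smooth). -/
theorem euler_projective_closure_smooth (a₁ a₂ a₃ : ℂ)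
    (hd₁₂ : a₁ ≠ a₂) (hd₂₃ : a₂ ≠ a₃) (hd₁₃ : a₁ ≠ a₃)
    (c₁ c₂ : ℂ)
    (hN : (c₁ - a₁ * c₂) * (c₁ - a₂ * c₂) * (c₁ - a₃ * c₂) ≠ 0)
    (t₀ t₁ t₂ t₃ : ℂ) (ht : ![t₀, t₁, t₂, t₃] ≠ 0)
    (hG₁ : a₁ * t₁ ^ 2 + a₂ * t₂ ^ 2 + a₃ * t₃ ^ 2 - c₁ * t₀ ^ 2 = 0)
    (hG₂ : t₁ ^ 2 + t₂ ^ 2 + t₃ ^ 2 - c₂ * t₀ ^ 2 = 0) :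
    (!![-2 * c₁ * t₀, 2 * a₁ * t₁, 2 * a₂ * t₂, 2 * a₃ * t₃;
        -2 * c₂ * t₀, 2 * t₁, 2 * t₂, 2 * t₃] : Matrix (Fin 2) (Fin 4) ℂ).rank = 2 := by
  obtain ⟨hN₁, hN₂, hN₃⟩ : (c₁ - a₁ * c₂) ≠ 0 ∧ (c₁ - a₂ * c₂) ≠ 0 ∧ (c₁ - a₃ * c₂) ≠ 0 := by
    refine ⟨?_, ?_, ?_⟩ <;> intro h <;> apply hN <;> rw [h] <;> ring
  -- minor of columns i, j (both among 1..3)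
  by_cases h1 : t₁ = 0 <;> by_cases h2 : t₂ = 0 <;> by_cases h3 : t₃ = 0
  · -- all spatial coords zero: contradiction
    exfalso
    have ht₀ : t₀ ≠ 0 := by
      intro h0
      apply ht
      ext i
      fin_cases i <;> simp [h0, h1, h2, h3]
    rw [h1, h2, h3] at hG₁ hG₂
    have e2 : c₂ * t₀ ^ 2 = 0 := by linear_combination -hG₂
    have e1 : c₁ * t₀ ^ 2 = 0 := by linear_combination -hG₁
    have ht₀2 : t₀ ^ 2 ≠ 0 := pow_ne_zero 2 ht₀
    have hc₂ : c₂ = 0 := by rcases mul_eq_zero.mp e2 with h | h; exact h; exact absurd h ht₀2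
    have hc₁ : c₁ = 0 := by rcases mul_eq_zero.mp e1 with h | h; exact h; exact absurd h ht₀2
    exact hN₁ (by rw [hc₁, hc₂]; ring)
  all_goals by_cases h0 : t₀ = 0
  -- t₃ ≠ 0 only, t₀ = 0: contradiction from equations
  · exfalso
    rw [h0, h1, h2] at hG₂
    have h3sq : t₃ ^ 2 = 0 := by linear_combination hG₂
    exact h3 (pow_eq_zero_iff (n := 2) (by norm_num) |>.mp h3sq)
  -- t₃ ≠ 0, t₀ ≠ 0: columns 0 and 3
  · refine rank_two_of_minor 0 3 ?_
    show (-2 * c₁ * t₀) * (2 * t₃) - (2 * a₃ * t₃) * (-2 * c₂ * t₀) ≠ 0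
    have key : (-2 * c₁ * t₀) * (2 * t₃) - (2 * a₃ * t₃) * (-2 * c₂ * t₀)
        = 4 * t₀ * t₃ * (a₃ * c₂ - c₁) := by ring
    rw [key]
    refine mul_ne_zero (mul_ne_zero (mul_ne_zero (by norm_num) h0) h3) ?_
    intro h; exact hN₃ (by linear_combination -h)
  -- t₂ ≠ 0, t₃ = 0, t₀ = 0: contradiction
  · exfalso
    rw [h0, h1, h3] at hG₂
    have : t₂ ^ 2 = 0 := by linear_combination hG₂
    exact h2 (pow_eq_zero_iff (n := 2) (by norm_num) |>.mp this)
  -- t₂ ≠ 0, t₃ = 0, t₀ ≠ 0: columns 0 and 2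
  · refine rank_two_of_minor 0 2 ?_
    show (-2 * c₁ * t₀) * (2 * t₂) - (2 * a₂ * t₂) * (-2 * c₂ * t₀) ≠ 0
    have key : (-2 * c₁ * t₀) * (2 * t₂) - (2 * a₂ * t₂) * (-2 * c₂ * t₀)
        = 4 * t₀ * t₂ * (a₂ * c₂ - c₁) := by ring
    rw [key]
    refine mul_ne_zero (mul_ne_zero (mul_ne_zero (by norm_num) h0) h2) ?_
    intro h; exact hN₂ (by linear_combination -h)
  -- t₂ ≠ 0, t₃ ≠ 0: columns 2 and 3
  · refine rank_two_of_minor 2 3 ?_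
    show (2 * a₂ * t₂) * (2 * t₃) - (2 * a₃ * t₃) * (2 * t₂) ≠ 0
    have key : (2 * a₂ * t₂) * (2 * t₃) - (2 * a₃ * t₃) * (2 * t₂)
        = 4 * t₂ * t₃ * (a₂ - a₃) := by ring
    rw [key]
    exact mul_ne_zero (mul_ne_zero (mul_ne_zero (by norm_num) h2) h3) (sub_ne_zero.mpr hd₂₃)
  · refine rank_two_of_minor 2 3 ?_
    show (2 * a₂ * t₂) * (2 * t₃) - (2 * a₃ * t₃) * (2 * t₂) ≠ 0
    have key : (2 * a₂ * t₂) * (2 * t₃) - (2 * a₃ * t₃) * (2 * t₂)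
        = 4 * t₂ * t₃ * (a₂ - a₃) := by ring
    rw [key]
    exact mul_ne_zero (mul_ne_zero (mul_ne_zero (by norm_num) h2) h3) (sub_ne_zero.mpr hd₂₃)
  -- t₁ ≠ 0, t₂ = 0, t₃ = 0, t₀ = 0: contradiction
  · exfalso
    rw [h0, h2, h3] at hG₂
    have : t₁ ^ 2 = 0 := by linear_combination hG₂
    exact h1 (pow_eq_zero_iff (n := 2) (by norm_num) |>.mp this)
  -- t₁ ≠ 0, t₂ = 0, t₃ = 0, t₀ ≠ 0: columns 0 and 1
  · refine rank_two_of_minor 0 1 ?_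
    show (-2 * c₁ * t₀) * (2 * t₁) - (2 * a₁ * t₁) * (-2 * c₂ * t₀) ≠ 0
    have key : (-2 * c₁ * t₀) * (2 * t₁) - (2 * a₁ * t₁) * (-2 * c₂ * t₀)
        = 4 * t₀ * t₁ * (a₁ * c₂ - c₁) := by ring
    rw [key]
    refine mul_ne_zero (mul_ne_zero (mul_ne_zero (by norm_num) h0) h1) ?_
    intro h; exact hN₁ (by linear_combination -h)
  -- t₁ ≠ 0, t₂ = 0, t₃ ≠ 0: columns 1 and 3
  · refine rank_two_of_minor 1 3 ?_
    show (2 * a₁ * t₁) * (2 * t₃) - (2 * a₃ * t₃) * (2 * t₁) ≠ 0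
    have key : (2 * a₁ * t₁) * (2 * t₃) - (2 * a₃ * t₃) * (2 * t₁)
        = 4 * t₁ * t₃ * (a₁ - a₃) := by ring
    rw [key]
    exact mul_ne_zero (mul_ne_zero (mul_ne_zero (by norm_num) h1) h3) (sub_ne_zero.mpr hd₁₃)
  · refine rank_two_of_minor 1 3 ?_
    show (2 * a₁ * t₁) * (2 * t₃) - (2 * a₃ * t₃) * (2 * t₁) ≠ 0
    have key : (2 * a₁ * t₁) * (2 * t₃) - (2 * a₃ * t₃) * (2 * t₁)
        = 4 * t₁ * t₃ * (a₁ - a₃) := by ring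
    rw [key]
    exact mul_ne_zero (mul_ne_zero (mul_ne_zero (by norm_num) h1) h3) (sub_ne_zero.mpr hd₁₃)
  -- t₁ ≠ 0, t₂ ≠ 0: columns 1 and 2
  · refine rank_two_of_minor 1 2 ?_
    show (2 * a₁ * t₁) * (2 * t₂) - (2 * a₂ * t₂) * (2 * t₁) ≠ 0
    have key : (2 * a₁ * t₁) * (2 * t₂) - (2 * a₂ * t₂) * (2 * t₁)
        = 4 * t₁ * t₂ * (a₁ - a₂) := by ring
    rw [key]
    exact mul_ne_zero (mul_ne_zero (mul_ne_zero (by norm_num) h1) h2) (sub_ne_zero.mpr hd₁₂)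
  · refine rank_two_of_minor 1 2 ?_
    show (2 * a₁ * t₁) * (2 * t₂) - (2 * a₂ * t₂) * (2 * t₁) ≠ 0
    have key : (2 * a₁ * t₁) * (2 * t₂) - (2 * a₂ * t₂) * (2 * t₁)
        = 4 * t₁ * t₂ * (a₁ - a₂) := by ring
    rw [key]
    exact mul_ne_zero (mul_ne_zero (mul_ne_zero (by norm_num) h1) h2) (sub_ne_zero.mpr hd₁₂)
  · refine rank_two_of_minor 1 2 ?_
    show (2 * a₁ * t₁) * (2 * t₂) - (2 * a₂ * t₂) * (2 * t₁) ≠ 0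
    have key : (2 * a₁ * t₁) * (2 * t₂) - (2 * a₂ * t₂) * (2 * t₁)
        = 4 * t₁ * t₂ * (a₁ - a₂) := by ring
    rw [key]
    exact mul_ne_zero (mul_ne_zero (mul_ne_zero (by norm_num) h1) h2) (sub_ne_zero.mpr hd₁₂)
  · refine rank_two_of_minor 1 2 ?_
    show (2 * a₁ * t₁) * (2 * t₂) - (2 * a₂ * t₂) * (2 * t₁) ≠ 0
    have key : (2 * a₁ * t₁) * (2 * t₂) - (2 * a₂ * t₂) * (2 * t₁)
        = 4 * t₁ * t₂ * (a₁ - a₂) := by ring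
    rw [key]
    exact mul_ne_zero (mul_ne_zero (mul_ne_zero (by norm_num) h1) h2) (sub_ne_zero.mpr hd₁₂)
end

section
/- If N(c₁,c₂) ≠ 0, then the quotient ℂ-algebra ℂ[x,y]/(y² - F(c₁,c₂,x)) is smooth over ℂ; that is, the affine curve E'_c = Spec ℂ[x,y]/(y² - F(c₁,c₂,x)) is a smooth plane affine curve over ℂ. -/
open MvPolynomial

set_option maxHeartbeats 1600000 in
/-- Let `a₁, a₂, a₃` be distinct complex numbers and
`F(z₁,z₂,x) = ((a₂-a₃)x² + z₁ - a₂z₂)((a₃-a₁)x² - z₁ + a₁z₂)`.  If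
`N(c₁,c₂) = ∏ᵢ (c₁ - aᵢc₂) ≠ 0`, then the quotient ℂ-algebra
`ℂ[x,y]/(y² - F(c₁,c₂,x))` is smooth over ℂ; that is, the affine curve
`E'_c = Spec ℂ[x,y]/(y² - F(c₁,c₂,x))` is a smooth plane affine curve over ℂ.
(Here `x = X 0`, `y = X 1` in `MvPolynomial (Fin 2) ℂ`.) -/
theorem euler_quartic_curve_smooth (a₁ a₂ a₃ : ℂ)
    (hd₁₂ : a₁ ≠ a₂) (hd₂₃ : a₂ ≠ a₃) (hd₁₃ : a₁ ≠ a₃)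
    (c₁ c₂ : ℂ)
    (hN : (c₁ - a₁ * c₂) * (c₁ - a₂ * c₂) * (c₁ - a₃ * c₂) ≠ 0)
    (I : Ideal (MvPolynomial (Fin 2) ℂ))
    (hI : I = Ideal.span
      {X 1 ^ 2 - (C (a₂ - a₃) * X 0 ^ 2 + C c₁ - C (a₂ * c₂)) *
        (C (a₃ - a₁) * X 0 ^ 2 - C c₁ + C (a₁ * c₂))}) :
    Algebra.Smooth ℂ (MvPolynomial (Fin 2) ℂ ⧸ I) := by
  classical
  have h1 : c₁ - a₁ * c₂ ≠ 0 := fun h => hN (by rw [h]; ring)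
  have h2 : c₁ - a₂ * c₂ ≠ 0 := fun h => hN (by rw [h]; ring)
  have h3 : c₁ - a₃ * c₂ ≠ 0 := fun h => hN (by rw [h]; ring)
  have h1' : a₁ * c₂ - c₁ ≠ 0 := fun h => h1 (by linear_combination -h)
  set f : MvPolynomial (Fin 2) ℂ :=
    X 1 ^ 2 - (C (a₂ - a₃) * X 0 ^ 2 + C c₁ - C (a₂ * c₂)) *
      (C (a₃ - a₁) * X 0 ^ 2 - C c₁ + C (a₁ * c₂)) with hf_def
  set ag : ℂ := (a₂ - a₃) * (a₃ - a₁) with hag_def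
  set bd : ℂ := (c₁ - a₂ * c₂) * (a₁ * c₂ - c₁) with hbd_def
  set nn : ℂ := (a₂ - a₃) * (a₁ * c₂ - c₁) + (a₃ - a₁) * (c₁ - a₂ * c₂) with hnn_def
  set k : ℂ := 4 * ((a₂ - a₁) * (c₁ - a₃ * c₂)) ^ 2 * bd with hk_def
  have hk : k ≠ 0 := by
    refine mul_ne_zero (mul_ne_zero (by norm_num) (pow_ne_zero _ (mul_ne_zero ?_ h3)))
      (mul_ne_zero h2 h1')
    exact sub_ne_zero.mpr (Ne.symm hd₁₂)
  set G₁ : MvPolynomial (Fin 2) ℂ :=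
    C k⁻¹ * (C (2 * nn ^ 2 - 4 * ag * bd) * X 0 + C (2 * ag * nn) * X 0 ^ 3) with hG₁_def
  set G₂ : MvPolynomial (Fin 2) ℂ :=
    C k⁻¹ * ((C (4 * ag * nn) * X 0 ^ 2 + C (2 * nn ^ 2 - 8 * ag * bd)) * X 1) with hG₂_def
  set W : MvPolynomial (Fin 2) ℂ :=
    C k⁻¹ * (C (8 * ag * nn) * X 0 ^ 2 + C (4 * nn ^ 2 - 16 * ag * bd)) with hW_def
  have hCk : (C k⁻¹ : MvPolynomial (Fin 2) ℂ) * C k = 1 := by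
    rw [← C_mul, inv_mul_cancel₀ hk, C_1]
  have key : G₁ * pderiv 0 f + G₂ * pderiv 1 f = 1 + W * f := by
    have hd0 : pderiv 0 f =
        - (2 * C (a₂ - a₃) * X 0 * (C (a₃ - a₁) * X 0 ^ 2 - C c₁ + C (a₁ * c₂))
          + (C (a₂ - a₃) * X 0 ^ 2 + C c₁ - C (a₂ * c₂)) * (2 * C (a₃ - a₁) * X 0)) := by
      rw [hf_def]
      simp [pderiv_mul, pderiv_pow, pderiv_X_self,
        pderiv_X_of_ne (show (1 : Fin 2) ≠ 0 by decide), pderiv_C]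
      ring
    have hd1 : pderiv 1 f = 2 * X 1 := by
      rw [hf_def]
      simp [pderiv_mul, pderiv_pow, pderiv_X_self,
        pderiv_X_of_ne (show (0 : Fin 2) ≠ 1 by decide), pderiv_C]
    rw [hd0, hd1, hG₁_def, hG₂_def, hW_def, hf_def]
    simp only [hk_def, hag_def, hbd_def, hnn_def] at hCk ⊢
    simp only [map_mul, map_add, map_sub, map_pow, map_ofNat] at hCk ⊢
    linear_combination hCk
  have hfI : f ∈ I := hI ▸ Ideal.subset_span rfl
  constructor
  · -- Formally smooth
    have hsurj : Function.Surjective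
        (algebraMap (MvPolynomial (Fin 2) ℂ) (MvPolynomial (Fin 2) ℂ ⧸ I)) := by
      rw [Ideal.Quotient.algebraMap_eq]; exact Ideal.Quotient.mk_surjective
    rw [Algebra.FormallySmooth.iff_split_injection hsurj]
    set J : Ideal (MvPolynomial (Fin 2) ℂ) :=
      RingHom.ker (algebraMap (MvPolynomial (Fin 2) ℂ) (MvPolynomial (Fin 2) ℂ ⧸ I)) with hJ_def
    have hJ : J = I := by rw [hJ_def, Ideal.Quotient.algebraMap_eq, Ideal.mk_ker]
    have hfJ : f ∈ J := by rw [hJ]; exact hfI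
    let w₀ : J.Cotangent := J.toCotangent ⟨G₁ * f, J.mul_mem_left _ hfJ⟩
    let w₁ : J.Cotangent := J.toCotangent ⟨G₂ * f, J.mul_mem_left _ hfJ⟩
    let φ : Ω[MvPolynomial (Fin 2) ℂ⁄ℂ] →ₗ[MvPolynomial (Fin 2) ℂ] J.Cotangent :=
      (KaehlerDifferential.mvPolynomialBasis ℂ (Fin 2)).constr (MvPolynomial (Fin 2) ℂ) ![w₀, w₁]
    have hφ : ∀ p : MvPolynomial (Fin 2) ℂ,
        φ (KaehlerDifferential.D ℂ (MvPolynomial (Fin 2) ℂ) p)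
          = pderiv 0 p • w₀ + pderiv 1 p • w₁ := by
      have hder : φ.compDer (KaehlerDifferential.D ℂ (MvPolynomial (Fin 2) ℂ)) =
          (LinearMap.toSpanSingleton (MvPolynomial (Fin 2) ℂ) J.Cotangent w₀).compDer (pderiv 0)
          + (LinearMap.toSpanSingleton (MvPolynomial (Fin 2) ℂ) J.Cotangent w₁).compDer
              (pderiv 1) := by
        apply MvPolynomial.derivation_ext
        intro i
        fin_cases i <;>
          simp [φ, ← KaehlerDifferential.mvPolynomialBasis_apply, Module.Basis.constr_basis,
            pderiv_X_self, pderiv_X_of_ne (show (1 : Fin 2) ≠ 0 by decide),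
            pderiv_X_of_ne (show (0 : Fin 2) ≠ 1 by decide)]
      intro p
      have := DFunLike.congr_fun hder p
      simpa using this
    have hker0 : (I : Submodule (MvPolynomial (Fin 2) ℂ) (MvPolynomial (Fin 2) ℂ)) ≤
        LinearMap.ker (LinearMap.toSpanSingleton (MvPolynomial (Fin 2) ℂ)
          (Ω[MvPolynomial (Fin 2) ℂ⁄ℂ] →ₗ[MvPolynomial (Fin 2) ℂ] J.Cotangent) φ) := by
      intro x hx
      rw [LinearMap.mem_ker, LinearMap.toSpanSingleton_apply]
      refine LinearMap.ext fun ω => ?_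
      rw [LinearMap.smul_apply, LinearMap.zero_apply]
      exact Ideal.Cotangent.smul_eq_zero_of_mem (by rw [hJ]; exact hx) _
    refine ⟨TensorProduct.lift (Submodule.liftQ (I : Submodule (MvPolynomial (Fin 2) ℂ)
        (MvPolynomial (Fin 2) ℂ)) (LinearMap.toSpanSingleton _ _ φ) hker0), ?_⟩
    · apply LinearMap.ext
      intro t
      obtain ⟨⟨g, hg⟩, rfl⟩ := Ideal.toCotangent_surjective _ t
      obtain ⟨q, hq⟩ := Ideal.mem_span_singleton'.mp
        (show g ∈ Ideal.span {f} by rw [← hI, ← hJ]; exact hg)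
      rw [LinearMap.comp_apply, LinearMap.id_apply,
        KaehlerDifferential.kerCotangentToTensor_toCotangent, TensorProduct.lift.tmul]
      have hψ1 : Submodule.liftQ (I : Submodule (MvPolynomial (Fin 2) ℂ)
          (MvPolynomial (Fin 2) ℂ)) (LinearMap.toSpanSingleton _ _ φ) hker0
          (1 : MvPolynomial (Fin 2) ℂ ⧸ I) = φ := by
        rw [show (1 : MvPolynomial (Fin 2) ℂ ⧸ I) = Submodule.Quotient.mk 1 from rfl,
          Submodule.liftQ_apply, LinearMap.toSpanSingleton_apply, one_smul]
      rw [hψ1]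
      obtain rfl : g = q * f := hq.symm
      rw [Derivation.leibniz, map_add, map_smul, map_smul, hφ, hφ,
        Ideal.Cotangent.smul_eq_zero_of_mem hfJ, add_zero, smul_add, smul_smul, smul_smul]
      show (q * pderiv 0 f) • J.toCotangent _ + (q * pderiv 1 f) • J.toCotangent _ = _
      rw [← map_smul, ← map_smul, ← map_add, Ideal.toCotangent_eq]
      simp only [Submodule.coe_add, SetLike.val_smul, smul_eq_mul]
      have hdiff : q * pderiv 0 f * (G₁ * f) + q * pderiv 1 f * (G₂ * f) - q * f
          = (q * f) * (W * f) := by linear_combination (q * f) * key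
      rw [hdiff, pow_two]
      exact Ideal.mul_mem_mul (J.mul_mem_left q hfJ) (J.mul_mem_left W hfJ)
  · -- Finite presentation
    exact Algebra.FinitePresentation.quotient ⟨{f}, by rw [hI, Finset.coe_singleton]⟩
end

section
/- For all complex numbers a₁, a₂, a₃, c₁, c₂, the polynomial ((a₁-a₂)x₁x₂)² - F(c₁,c₂,x₃) belongs to the ideal I_c of ℂ[x₁,x₂,x₃] generated by H₁ - c₁ and H₂ - c₂. Consequently the assignment x ↦ x₃, y ↦ (a₁-a₂)x₁x₂ induces a well-defined ℂ-algebra homomorphism ℂ[x,y]/(y² - F(c₁,c₂,x)) → ℂ[x₁,x₂,x₃]/I_c, i.e. a morphism π : E_c → E'_c. -/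
open MvPolynomial

/-- With `H₁ = a₁x₁² + a₂x₂² + a₃x₃²`, `H₂ = x₁² + x₂² + x₃²`,
`I_c = (H₁ - c₁, H₂ - c₂)` and
`F(z₁,z₂,x) = ((a₂-a₃)x² + z₁ - a₂z₂)((a₃-a₁)x² - z₁ + a₁z₂)`:
the polynomial `((a₁-a₂)x₁x₂)² - F(c₁,c₂,x₃)` belongs to `I_c`.  Consequently the
assignment `x ↦ x₃`, `y ↦ (a₁-a₂)x₁x₂` induces a well-defined ℂ-algebra homomorphism
`ℂ[x,y]/(y² - F(c₁,c₂,x)) → ℂ[x₁,x₂,x₃]/I_c`, i.e. a morphism `π : E_c → E'_c`. -/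
theorem euler_isogeny_well_defined (a₁ a₂ a₃ c₁ c₂ : ℂ)
    (I : Ideal (MvPolynomial (Fin 3) ℂ))
    (hI : I = Ideal.span
      {C a₁ * X 0 ^ 2 + C a₂ * X 1 ^ 2 + C a₃ * X 2 ^ 2 - C c₁,
       X 0 ^ 2 + X 1 ^ 2 + X 2 ^ 2 - C c₂})
    (J : Ideal (MvPolynomial (Fin 2) ℂ))
    (hJ : J = Ideal.span
      {X 1 ^ 2 - (C (a₂ - a₃) * X 0 ^ 2 + C c₁ - C (a₂ * c₂)) *
        (C (a₃ - a₁) * X 0 ^ 2 - C c₁ + C (a₁ * c₂))}) :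
    ((C (a₁ - a₂) * X 0 * X 1) ^ 2 -
        (C (a₂ - a₃) * X 2 ^ 2 + C c₁ - C (a₂ * c₂)) *
          (C (a₃ - a₁) * X 2 ^ 2 - C c₁ + C (a₁ * c₂)) ∈ I) ∧
      ∃ φ : (MvPolynomial (Fin 2) ℂ ⧸ J) →ₐ[ℂ] (MvPolynomial (Fin 3) ℂ ⧸ I),
        φ (Ideal.Quotient.mk J (X 0)) = Ideal.Quotient.mk I (X 2) ∧
        φ (Ideal.Quotient.mk J (X 1)) =
          Ideal.Quotient.mk I (C (a₁ - a₂) * X 0 * X 1) := by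
  set P : MvPolynomial (Fin 3) ℂ :=
    C a₁ * X 0 ^ 2 + C a₂ * X 1 ^ 2 + C a₃ * X 2 ^ 2 - C c₁ with hP
  set Q : MvPolynomial (Fin 3) ℂ := X 0 ^ 2 + X 1 ^ 2 + X 2 ^ 2 - C c₂ with hQ
  have hPmem : P ∈ I := hI ▸ Ideal.subset_span (by left; rfl)
  have hQmem : Q ∈ I := hI ▸ Ideal.subset_span (by right; rfl)
  have hmem : (C (a₁ - a₂) * X 0 * X 1) ^ 2 -
        (C (a₂ - a₃) * X 2 ^ 2 + C c₁ - C (a₂ * c₂)) *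
          (C (a₃ - a₁) * X 2 ^ 2 - C c₁ + C (a₁ * c₂)) ∈ I := by
    have key : (C (a₁ - a₂) * X 0 * X 1) ^ 2 -
        (C (a₂ - a₃) * X 2 ^ 2 + C c₁ - C (a₂ * c₂)) *
          (C (a₃ - a₁) * X 2 ^ 2 - C c₁ + C (a₁ * c₂))
        = (C (a₁ - a₂) * X 1 ^ 2 -
            (C (a₂ - a₃) * X 2 ^ 2 + C c₁ - C (a₂ * c₂))) * P
          + (C a₁ * (C (a₂ - a₃) * X 2 ^ 2 + C c₁ - C (a₂ * c₂))
              - C a₂ * (C (a₁ - a₂) * X 1 ^ 2)) * Q := by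
      rw [hP, hQ]
      simp only [map_sub, map_add, map_mul]
      ring
    rw [key]
    exact Ideal.add_mem I (Ideal.mul_mem_left I _ hPmem) (Ideal.mul_mem_left I _ hQmem)
  refine ⟨hmem, ?_⟩
  let ψ : MvPolynomial (Fin 2) ℂ →ₐ[ℂ] (MvPolynomial (Fin 3) ℂ ⧸ I) :=
    (Ideal.Quotient.mkₐ ℂ I).comp
      (aeval ![X 2, C (a₁ - a₂) * X 0 * X 1])
  have hker : J ≤ RingHom.ker ψ.toRingHom := by
    rw [hJ, Ideal.span_le]
    rintro p hp
    simp only [Set.mem_singleton_iff] at hp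
    subst hp
    simp only [SetLike.mem_coe, RingHom.mem_ker]
    show ψ _ = 0
    have haev : (aeval ![X 2, C (a₁ - a₂) * X 0 * X 1] :
          MvPolynomial (Fin 2) ℂ →ₐ[ℂ] MvPolynomial (Fin 3) ℂ)
        (X 1 ^ 2 - (C (a₂ - a₃) * X 0 ^ 2 + C c₁ - C (a₂ * c₂)) *
          (C (a₃ - a₁) * X 0 ^ 2 - C c₁ + C (a₁ * c₂)))
        = (C (a₁ - a₂) * X 0 * X 1) ^ 2 -
          (C (a₂ - a₃) * X 2 ^ 2 + C c₁ - C (a₂ * c₂)) *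
            (C (a₃ - a₁) * X 2 ^ 2 - C c₁ + C (a₁ * c₂)) := by
      simp only [map_sub, map_add, map_mul, map_pow, aeval_X, aeval_C,
        Matrix.cons_val_zero, Matrix.cons_val_one, Matrix.head_cons,
        MvPolynomial.algebraMap_eq]
    have : ψ (X 1 ^ 2 - (C (a₂ - a₃) * X 0 ^ 2 + C c₁ - C (a₂ * c₂)) *
        (C (a₃ - a₁) * X 0 ^ 2 - C c₁ + C (a₁ * c₂)))
        = Ideal.Quotient.mk I ((C (a₁ - a₂) * X 0 * X 1) ^ 2 -
          (C (a₂ - a₃) * X 2 ^ 2 + C c₁ - C (a₂ * c₂)) *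
            (C (a₃ - a₁) * X 2 ^ 2 - C c₁ + C (a₁ * c₂))) := by
      rw [show ψ _ = Ideal.Quotient.mk I _ from congrArg (Ideal.Quotient.mk I) haev]
    rw [this, Ideal.Quotient.eq_zero_iff_mem]
    exact hmem
  refine ⟨Ideal.Quotient.liftₐ J ψ (fun a ha => ?_), ?_, ?_⟩
  · exact hker ha
  · show Ideal.Quotient.mk I (aeval ![X 2, C (a₁ - a₂) * X 0 * X 1] (X 0 : MvPolynomial (Fin 2) ℂ)) = _
    rw [aeval_X]
    rfl
  · show Ideal.Quotient.mk I (aeval ![X 2, C (a₁ - a₂) * X 0 * X 1] (X 1 : MvPolynomial (Fin 2) ℂ)) = _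
    rw [aeval_X]
    rfl
end

section
/- For (c₁,c₂) ∈ ℂ², the discriminant of the Weierstrass curve W(c₁,c₂) vanishes if and only if N(c₁,c₂) = 0; in particular, if N(c₁,c₂) ≠ 0 then W(c₁,c₂) defines an elliptic curve over ℂ. -/
/-- Let `a₁, a₂, a₃` be distinct complex numbers,
`N(z₁,z₂) = ∏ᵢ (z₁ - aᵢz₂)`, `A = (a₂-a₃)(a₃-a₁)`,
`C = (a₂-a₃)(a₁c₂-c₁) + (a₃-a₁)(c₁-a₂c₂)`, `E = (c₁-a₂c₂)(a₁c₂-c₁)`, and `W(c₁,c₂)` the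
Weierstrass curve `v² = u³ + Cu² - 4AEu - 4ACE`.  Then the discriminant of `W(c₁,c₂)`
vanishes iff `N(c₁,c₂) = 0`; in particular, if `N(c₁,c₂) ≠ 0` then `W(c₁,c₂)` is an
elliptic curve over ℂ. -/
theorem euler_weierstrass_discriminant (a₁ a₂ a₃ : ℂ)
    (hd₁₂ : a₁ ≠ a₂) (hd₂₃ : a₂ ≠ a₃) (hd₁₃ : a₁ ≠ a₃)
    (c₁ c₂ : ℂ) (W : WeierstrassCurve ℂ)
    (hW : W = ⟨0, (a₂ - a₃) * (a₁ * c₂ - c₁) + (a₃ - a₁) * (c₁ - a₂ * c₂), 0,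
      -4 * ((a₂ - a₃) * (a₃ - a₁)) * ((c₁ - a₂ * c₂) * (a₁ * c₂ - c₁)),
      -4 * ((a₂ - a₃) * (a₃ - a₁)) *
        ((a₂ - a₃) * (a₁ * c₂ - c₁) + (a₃ - a₁) * (c₁ - a₂ * c₂)) *
        ((c₁ - a₂ * c₂) * (a₁ * c₂ - c₁))⟩) :
    (W.Δ = 0 ↔ (c₁ - a₁ * c₂) * (c₁ - a₂ * c₂) * (c₁ - a₃ * c₂) = 0) ∧
      ((c₁ - a₁ * c₂) * (c₁ - a₂ * c₂) * (c₁ - a₃ * c₂) ≠ 0 → W.IsElliptic) := by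
  have hΔ : W.Δ = -256 * (a₁ - a₂) ^ 4 * (a₂ - a₃) * (a₃ - a₁) *
      ((c₁ - a₁ * c₂) * (c₁ - a₂ * c₂) * (c₁ - a₃ * c₂)) * (c₁ - a₃ * c₂) ^ 3 := by
    subst hW
    simp only [WeierstrassCurve.Δ, WeierstrassCurve.b₂, WeierstrassCurve.b₄,
      WeierstrassCurve.b₆, WeierstrassCurve.b₈]
    ring
  have h12 : a₁ - a₂ ≠ 0 := sub_ne_zero.mpr hd₁₂
  have h23 : a₂ - a₃ ≠ 0 := sub_ne_zero.mpr hd₂₃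
  have h31 : a₃ - a₁ ≠ 0 := sub_ne_zero.mpr (Ne.symm hd₁₃)
  have key : W.Δ = 0 ↔ (c₁ - a₁ * c₂) * (c₁ - a₂ * c₂) * (c₁ - a₃ * c₂) = 0 := by
    rw [hΔ]
    constructor
    · intro h
      rcases mul_eq_zero.mp h with h | h
      · rcases mul_eq_zero.mp h with h | h
        · exfalso
          have : (-256 : ℂ) * (a₁ - a₂) ^ 4 * (a₂ - a₃) * (a₃ - a₁) ≠ 0 := by
            apply mul_ne_zero (mul_ne_zero (mul_ne_zero (by norm_num) (pow_ne_zero _ h12)) h23) h31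
          exact this h
        · exact h
      · have : c₁ - a₃ * c₂ = 0 := pow_eq_zero_iff (by norm_num) |>.mp h
        rw [this]; ring
    · intro h
      rw [h]; ring
  refine ⟨key, fun h => ?_⟩
  exact ⟨isUnit_iff_ne_zero.mpr (fun h0 => h (key.mp h0))⟩
end

section
/- Suppose c₂ ≠ 0 and c₁ = a₁c₂. Then E(c₁,c₂) = 0, C(c₁,c₂) = (a₃-a₁)(a₁-a₂)c₂ ≠ 0, the discriminant Δ of W(c₁,c₂) vanishes, and the invariant c₄ of W(c₁,c₂) equals 16((a₃-a₁)(a₁-a₂)c₂)², which is nonzero. (Thus the fiber of the family at c₁ = a₁c₂ is a degenerate fiber with J-value ∞.) -/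
/-- Let `a₁, a₂, a₃` be distinct complex numbers,
`A = (a₂-a₃)(a₃-a₁)`, `C(c₁,c₂) = (a₂-a₃)(a₁c₂-c₁) + (a₃-a₁)(c₁-a₂c₂)`,
`E(c₁,c₂) = (c₁-a₂c₂)(a₁c₂-c₁)`, and let `W(c₁,c₂)` be the Weierstrass curve
`v² = u³ + Cu² - 4AEu - 4ACE`.  Suppose `c₂ ≠ 0` and `c₁ = a₁c₂`.  Then
`E(c₁,c₂) = 0`, `C(c₁,c₂) = (a₃-a₁)(a₁-a₂)c₂ ≠ 0`, the discriminant `Δ` of `W(c₁,c₂)`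
vanishes, and the invariant `c₄` of `W(c₁,c₂)` equals `16((a₃-a₁)(a₁-a₂)c₂)²`,
which is nonzero.  (The fiber at `c₁ = a₁c₂` is degenerate with `J`-value `∞`.) -/
theorem euler_degenerate_fiber (a₁ a₂ a₃ : ℂ)
    (hd₁₂ : a₁ ≠ a₂) (hd₂₃ : a₂ ≠ a₃) (hd₁₃ : a₁ ≠ a₃)
    (c₁ c₂ : ℂ) (hc₂ : c₂ ≠ 0) (hc₁ : c₁ = a₁ * c₂)
    (W : WeierstrassCurve ℂ)
    (hW : W = ⟨0, (a₂ - a₃) * (a₁ * c₂ - c₁) + (a₃ - a₁) * (c₁ - a₂ * c₂), 0,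
      -4 * ((a₂ - a₃) * (a₃ - a₁)) * ((c₁ - a₂ * c₂) * (a₁ * c₂ - c₁)),
      -4 * ((a₂ - a₃) * (a₃ - a₁)) *
        ((a₂ - a₃) * (a₁ * c₂ - c₁) + (a₃ - a₁) * (c₁ - a₂ * c₂)) *
        ((c₁ - a₂ * c₂) * (a₁ * c₂ - c₁))⟩) :
    (c₁ - a₂ * c₂) * (a₁ * c₂ - c₁) = 0 ∧
    (a₂ - a₃) * (a₁ * c₂ - c₁) + (a₃ - a₁) * (c₁ - a₂ * c₂)
      = (a₃ - a₁) * (a₁ - a₂) * c₂ ∧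
    (a₃ - a₁) * (a₁ - a₂) * c₂ ≠ 0 ∧
    W.Δ = 0 ∧
    W.c₄ = 16 * ((a₃ - a₁) * (a₁ - a₂) * c₂) ^ 2 ∧
    W.c₄ ≠ 0 := by
  subst hc₁ hW
  have hne : (a₃ - a₁) * (a₁ - a₂) * c₂ ≠ 0 := by
    apply mul_ne_zero (mul_ne_zero (sub_ne_zero.2 (Ne.symm hd₁₃)) (sub_ne_zero.2 hd₁₂)) hc₂
  refine ⟨by ring, by ring, hne, ?_, ?_, ?_⟩
  · simp only [WeierstrassCurve.Δ, WeierstrassCurve.b₂, WeierstrassCurve.b₄,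
      WeierstrassCurve.b₆, WeierstrassCurve.b₈]
    ring
  · simp only [WeierstrassCurve.c₄, WeierstrassCurve.b₂, WeierstrassCurve.b₄]
    ring
  · simp only [WeierstrassCurve.c₄, WeierstrassCurve.b₂, WeierstrassCurve.b₄]
    have : ∀ x : ℂ, x ≠ 0 → 16 * x ^ 2 ≠ 0 := fun x hx => mul_ne_zero (by norm_num) (pow_ne_zero _ hx)
    have h := this _ hne
    convert h using 1
    ring
end

section
/- Fix c₂ ∈ ℂ with c₂ ≠ 0. Then the absolute value of the j-invariant of W(c₁,c₂) tends to infinity as c₁ tends to a₁c₂: precisely, the function c₁ ↦ ‖c₄(W(c₁,c₂))³ / Δ(W(c₁,c₂))‖ tends to +∞ along the punctured neighborhood filter at a₁c₂ (note that Δ(W(c₁,c₂)) ≠ 0 for all c₁ ≠ a₁c₂ sufficiently close to a₁c₂, since N(c₁,c₂) ≠ 0 there). -/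
open Filter

/-- Let `a₁, a₂, a₃` be distinct complex numbers and, for `c₁ ∈ ℂ`,
let `W c₁` be the Weierstrass curve `v² = u³ + Cu² - 4AEu - 4ACE` with
`A = (a₂-a₃)(a₃-a₁)`, `C = (a₂-a₃)(a₁c₂-c₁) + (a₃-a₁)(c₁-a₂c₂)`,
`E = (c₁-a₂c₂)(a₁c₂-c₁)`.  Fix `c₂ ≠ 0`.  Then the absolute value of the `j`-invariant
`c₄³/Δ` of `W c₁` tends to `+∞` as `c₁` tends to `a₁c₂` along the punctured
neighborhood filter. -/
theorem euler_j_invariant_tendsto_infinity (a₁ a₂ a₃ : ℂ)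
    (hd₁₂ : a₁ ≠ a₂) (hd₂₃ : a₂ ≠ a₃) (hd₁₃ : a₁ ≠ a₃)
    (c₂ : ℂ) (hc₂ : c₂ ≠ 0)
    (W : ℂ → WeierstrassCurve ℂ)
    (hW : ∀ c₁ : ℂ, W c₁ =
      ⟨0, (a₂ - a₃) * (a₁ * c₂ - c₁) + (a₃ - a₁) * (c₁ - a₂ * c₂), 0,
      -4 * ((a₂ - a₃) * (a₃ - a₁)) * ((c₁ - a₂ * c₂) * (a₁ * c₂ - c₁)),
      -4 * ((a₂ - a₃) * (a₃ - a₁)) *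
        ((a₂ - a₃) * (a₁ * c₂ - c₁) + (a₃ - a₁) * (c₁ - a₂ * c₂)) *
        ((c₁ - a₂ * c₂) * (a₁ * c₂ - c₁))⟩) :
    Tendsto (fun c₁ : ℂ => ‖(W c₁).c₄ ^ 3 / (W c₁).Δ‖)
      (nhdsWithin (a₁ * c₂) {a₁ * c₂}ᶜ) atTop := by
  set p : ℂ := a₁ * c₂ with hp
  set A : ℂ := (a₂ - a₃) * (a₃ - a₁) with hA
  set Cf : ℂ → ℂ := fun c₁ => (a₂ - a₃) * (a₁ * c₂ - c₁) + (a₃ - a₁) * (c₁ - a₂ * c₂)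
    with hCf
  set Ef : ℂ → ℂ := fun c₁ => (c₁ - a₂ * c₂) * (a₁ * c₂ - c₁) with hEf
  have hΔeq : ∀ c₁ : ℂ, (W c₁).Δ = 256 * A * Ef c₁ * (Cf c₁ ^ 2 - 4 * A * Ef c₁) ^ 2 := by
    intro c₁
    rw [hW]
    simp only [WeierstrassCurve.Δ, WeierstrassCurve.b₂, WeierstrassCurve.b₄,
      WeierstrassCurve.b₆, WeierstrassCurve.b₈, hCf, hEf, hA]
    ring
  have hc₄eq : ∀ c₁ : ℂ, (W c₁).c₄ = 16 * Cf c₁ ^ 2 + 192 * A * Ef c₁ := by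
    intro c₁
    rw [hW]
    simp only [WeierstrassCurve.c₄, WeierstrassCurve.b₂, WeierstrassCurve.b₄, hCf, hEf, hA]
    ring
  set C₀ : ℂ := (a₃ - a₁) * ((a₁ - a₂) * c₂) with hC₀
  have hC₀ne : C₀ ≠ 0 := by
    apply mul_ne_zero (sub_ne_zero.mpr (Ne.symm hd₁₃))
    exact mul_ne_zero (sub_ne_zero.mpr hd₁₂) hc₂
  have hAne : A ≠ 0 :=
    mul_ne_zero (sub_ne_zero.mpr hd₂₃) (sub_ne_zero.mpr (Ne.symm hd₁₃))
  -- limits of Cf and Ef at p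
  have hCcont : Continuous Cf := by fun_prop
  have hEcont : Continuous Ef := by fun_prop
  have hCp : Cf p = C₀ := by rw [hCf, hC₀, hp]; ring
  have hEp : Ef p = 0 := by rw [hEf, hp]; ring
  -- numerator tends to a positive value
  have hnum : Tendsto (fun c₁ : ℂ => ‖(W c₁).c₄ ^ 3‖) (nhdsWithin p {p}ᶜ)
      (nhds ‖(16 * C₀ ^ 2) ^ 3‖) := by
    have h1 : Tendsto (fun c₁ : ℂ => (W c₁).c₄ ^ 3) (nhdsWithin p {p}ᶜ)
        (nhds ((16 * C₀ ^ 2) ^ 3)) := by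
      have hc : Continuous (fun c₁ : ℂ => (16 * Cf c₁ ^ 2 + 192 * A * Ef c₁) ^ 3) := by
        fun_prop
      have := (hc.tendsto p).mono_left (nhdsWithin_le_nhds (s := {p}ᶜ))
      simp only [hCp, hEp, mul_zero, add_zero] at this
      convert this using 1
      · funext c₁; rw [hc₄eq]
    exact h1.norm
  -- denominator: norm tends to 0 from the right
  have hΔ0 : Tendsto (fun c₁ : ℂ => ‖(W c₁).Δ‖) (nhdsWithin p {p}ᶜ) (nhds 0) := by
    have hc : Continuous (fun c₁ : ℂ => 256 * A * Ef c₁ * (Cf c₁ ^ 2 - 4 * A * Ef c₁) ^ 2) :=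
      by fun_prop
    have := ((hc.tendsto p).mono_left (nhdsWithin_le_nhds (s := {p}ᶜ))).norm
    simp only [hCp, hEp, mul_zero, zero_mul, norm_zero] at this
    convert this using 1
    funext c₁; rw [hΔeq]
  have hΔne : ∀ᶠ c₁ in nhdsWithin p {p}ᶜ, (W c₁).Δ ≠ 0 := by
    have h1 : ∀ᶠ c₁ in nhdsWithin p {p}ᶜ, c₁ - a₂ * c₂ ≠ 0 := by
      have : ContinuousAt (fun c₁ : ℂ => c₁ - a₂ * c₂) p := by fun_prop
      have hne : p - a₂ * c₂ ≠ 0 := by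
        rw [hp, sub_ne_zero, ← sub_ne_zero, ← sub_mul]
        exact mul_ne_zero (sub_ne_zero.mpr hd₁₂) hc₂
      exact (this.eventually_ne hne).filter_mono nhdsWithin_le_nhds
    have h2 : ∀ᶠ c₁ in nhdsWithin p {p}ᶜ, a₁ * c₂ - c₁ ≠ 0 := by
      filter_upwards [self_mem_nhdsWithin] with c₁ hc₁
      rw [sub_ne_zero]
      exact fun h => hc₁ (by rw [← h]; rfl)
    have h3 : ∀ᶠ c₁ in nhdsWithin p {p}ᶜ, Cf c₁ ^ 2 - 4 * A * Ef c₁ ≠ 0 := by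
      have hct : ContinuousAt (fun c₁ : ℂ => Cf c₁ ^ 2 - 4 * A * Ef c₁) p := by fun_prop
      have hne : Cf p ^ 2 - 4 * A * Ef p ≠ 0 := by
        rw [hCp, hEp, mul_zero, sub_zero]
        exact pow_ne_zero 2 hC₀ne
      exact (hct.eventually_ne hne).filter_mono nhdsWithin_le_nhds
    filter_upwards [h1, h2, h3] with c₁ h1 h2 h3
    rw [hΔeq]
    exact mul_ne_zero (mul_ne_zero (mul_ne_zero (by norm_num) hAne)
      (mul_ne_zero h1 h2)) (pow_ne_zero 2 h3)
  have hΔpos : Tendsto (fun c₁ : ℂ => ‖(W c₁).Δ‖) (nhdsWithin p {p}ᶜ)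
      (nhdsWithin (0 : ℝ) (Set.Ioi 0)) := by
    rw [tendsto_nhdsWithin_iff]
    refine ⟨hΔ0, ?_⟩
    filter_upwards [hΔne] with c₁ h
    exact norm_pos_iff.mpr h
  have hinv : Tendsto (fun c₁ : ℂ => ‖(W c₁).Δ‖⁻¹) (nhdsWithin p {p}ᶜ) atTop :=
    tendsto_inv_nhdsGT_zero.comp hΔpos
  have hpos : (0 : ℝ) < ‖(16 * C₀ ^ 2) ^ 3‖ := by
    apply norm_pos_iff.mpr
    exact pow_ne_zero 3 (mul_ne_zero (by norm_num) (pow_ne_zero 2 hC₀ne))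
  have := hnum.pos_mul_atTop hpos hinv
  refine this.congr fun c₁ => ?_
  rw [norm_div, div_eq_mul_inv]
end
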